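/- Let I = (f) be a principal ideal generated by a polynomial f over a valued field. Then the tropical hypersurface of I, defined as the intersection of Trop(g) over all g in I, equals Trop(f). -/

import Mathlib

open MvPolynomial

/-- The tropical polynomial of `p = ∑ a_ν x^ν`: `y ↦ min_{ν ∈ supp p} (val(a_ν) + y·ν)`. -/
noncomputable def trop {K : Type*} [Field K] {n : ℕ}
    (v : AddValuation K (WithTop ℝ)) (p : MvPolynomial (Fin n) K) (y : Fin n → ℝ) :
    WithTop ℝ :=
  p.support.inf fun ν => v (p.coeff ν) + ((∑ i, y i * (ν i : ℝ) : ℝ) : WithTop ℝ)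

/-- The tropical hypersurface of `p`: the locus where the minimum is attained at least
twice. -/
noncomputable def tropSet {K : Type*} [Field K] {n : ℕ}
    (v : AddValuation K (WithTop ℝ)) (p : MvPolynomial (Fin n) K) : Set (Fin n → ℝ) :=
  { y | ∃ ν ∈ p.support, ∃ η ∈ p.support, ν ≠ η ∧
      v (p.coeff ν) + ((∑ i, y i * (ν i : ℝ) : ℝ) : WithTop ℝ) = trop v p y ∧
      v (p.coeff η) + ((∑ i, y i * (η i : ℝ) : ℝ) : WithTop ℝ) = trop v p y }

/-! At a point `y`, every term of `h * f` has value at least `trop h + trop f`. For the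
lexicographically largest (or smallest) minimizing exponents `μ` of `h` and `ν` of `f`, the
product of their coefficients is the only summand of minimal value in the coefficient of `h * f`
at `μ + ν`, so that value is attained and `trop (h * f) = trop h + trop f`. If the minimum for `f`
is attained twice, the lexicographically smallest and largest such pairs give two distinct
exponents of `h * f` attaining its minimum; hence `Trop f ⊆ Trop (h * f)`. -/

theorem AddValuation.le_map_sum_add_coe {R ι : Type*} [Ring R] (v : AddValuation R (WithTop ℝ))
    {s : Finset ι} {t : ι → R} {C : WithTop ℝ} {r : ℝ} (hs : ∀ i ∈ s, C ≤ v (t i) + r) :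
    C ≤ v (∑ i ∈ s, t i) + r := by
  have hC : C = C + ((-r : ℝ) : WithTop ℝ) + r := by
    rw [add_assoc, ← WithTop.coe_add, neg_add_cancel, WithTop.coe_zero, add_zero]
  rw [hC, WithTop.add_le_add_iff_right WithTop.coe_ne_top]
  refine v.map_le_sum fun i hi =>
    (WithTop.add_le_add_iff_right (z := (r : WithTop ℝ)) WithTop.coe_ne_top).1 ?_
  rw [← hC]
  exact hs i hi

section

variable {K : Type*} [Field K] {n : ℕ} (v : AddValuation K (WithTop ℝ))

noncomputable def tropTerm (p : MvPolynomial (Fin n) K) (y : Fin n → ℝ) (ν : Fin n →₀ ℕ) :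
    WithTop ℝ :=
  v (p.coeff ν) + ((∑ i, y i * (ν i : ℝ) : ℝ) : WithTop ℝ)

noncomputable def tropArgmin (p : MvPolynomial (Fin n) K) (y : Fin n → ℝ) :
    Finset (Fin n →₀ ℕ) :=
  p.support.filter fun ν => tropTerm v p y ν = trop v p y

variable {v}

theorem trop_le_tropTerm (p : MvPolynomial (Fin n) K) (y : Fin n → ℝ) (ν : Fin n →₀ ℕ) :
    trop v p y ≤ tropTerm v p y ν := by
  by_cases hν : ν ∈ p.support
  · exact Finset.inf_le hν
  · simp [tropTerm, notMem_support_iff.mp hν]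

theorem trop_zero (y : Fin n → ℝ) : trop v (0 : MvPolynomial (Fin n) K) y = ⊤ := by
  simp [trop]

theorem mem_tropArgmin {p : MvPolynomial (Fin n) K} {y : Fin n → ℝ} {ν : Fin n →₀ ℕ} :
    ν ∈ tropArgmin v p y ↔ ν ∈ p.support ∧ tropTerm v p y ν = trop v p y :=
  Finset.mem_filter

theorem mem_tropArgmin_of_eq_of_ne_top {p : MvPolynomial (Fin n) K} {y : Fin n → ℝ}
    {ν : Fin n →₀ ℕ} (hν : tropTerm v p y ν = trop v p y) (htop : trop v p y ≠ ⊤) :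
    ν ∈ tropArgmin v p y := by
  refine mem_tropArgmin.2 ⟨mem_support_iff.2 fun h0 => htop ?_, hν⟩
  rw [← hν, tropTerm, h0, AddValuation.map_zero, top_add]

theorem trop_ne_top_of_mem_tropArgmin {p : MvPolynomial (Fin n) K} {y : Fin n → ℝ}
    {ν : Fin n →₀ ℕ} (hν : ν ∈ tropArgmin v p y) : trop v p y ≠ ⊤ := by
  obtain ⟨hsupp, heq⟩ := mem_tropArgmin.1 hν
  rw [← heq, tropTerm]
  exact WithTop.add_ne_top.2 ⟨v.ne_top_iff.2 (mem_support_iff.1 hsupp), WithTop.coe_ne_top⟩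

theorem tropArgmin_nonempty {p : MvPolynomial (Fin n) K} (hp : p ≠ 0) (y : Fin n → ℝ) :
    (tropArgmin v p y).Nonempty := by
  obtain ⟨ν, hν, heq⟩ := p.support.exists_mem_eq_inf (support_nonempty.2 hp) (tropTerm v p y)
  exact ⟨ν, mem_tropArgmin.2 ⟨hν, heq.symm⟩⟩

theorem mem_tropSet_iff {p : MvPolynomial (Fin n) K} {y : Fin n → ℝ} :
    y ∈ tropSet v p ↔ ∃ ν ∈ tropArgmin v p y, ∃ η ∈ tropArgmin v p y, ν ≠ η := by
  constructor
  · rintro ⟨ν, hν, η, hη, hne, hνeq, hηeq⟩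
    exact ⟨ν, mem_tropArgmin.2 ⟨hν, hνeq⟩, η, mem_tropArgmin.2 ⟨hη, hηeq⟩, hne⟩
  · rintro ⟨ν, hν, η, hη, hne⟩
    exact ⟨ν, (mem_tropArgmin.1 hν).1, η, (mem_tropArgmin.1 hη).1, hne,
      (mem_tropArgmin.1 hν).2, (mem_tropArgmin.1 hη).2⟩

theorem map_coeff_mul_coeff_add_weight (h f : MvPolynomial (Fin n) K) (y : Fin n → ℝ)
    (a b : Fin n →₀ ℕ) :
    v (h.coeff a * f.coeff b) + ((∑ i, y i * ((a + b) i : ℝ) : ℝ) : WithTop ℝ) =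
      tropTerm v h y a + tropTerm v f y b := by
  simp only [tropTerm, v.map_mul, Finsupp.add_apply, Nat.cast_add, mul_add,
    Finset.sum_add_distrib, WithTop.coe_add]
  abel

theorem trop_add_trop_le_tropTerm_mul (h f : MvPolynomial (Fin n) K) (y : Fin n → ℝ)
    (ξ : Fin n →₀ ℕ) : trop v h y + trop v f y ≤ tropTerm v (h * f) y ξ := by
  rw [tropTerm, coeff_mul]
  refine v.le_map_sum_add_coe fun ab hab => ?_
  rw [← Finset.HasAntidiagonal.mem_antidiagonal.1 hab, map_coeff_mul_coeff_add_weight]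
  exact add_le_add (trop_le_tropTerm h y ab.1) (trop_le_tropTerm f y ab.2)

theorem tropTerm_mul_add_eq_of_unique {h f : MvPolynomial (Fin n) K} {y : Fin n → ℝ}
    {μ ν : Fin n →₀ ℕ} (hμ : μ ∈ tropArgmin v h y) (hν : ν ∈ tropArgmin v f y)
    (huniq : ∀ a ∈ tropArgmin v h y, ∀ b ∈ tropArgmin v f y, a + b = μ + ν → a = μ ∧ b = ν) :
    tropTerm v (h * f) y (μ + ν) = trop v h y + trop v f y := by
  have hh := trop_ne_top_of_mem_tropArgmin hμ
  have hf := trop_ne_top_of_mem_tropArgmin hν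
  have hterm : v (h.coeff μ * f.coeff ν) + ((∑ i, y i * ((μ + ν) i : ℝ) : ℝ) : WithTop ℝ) =
      trop v h y + trop v f y := by
    rw [map_coeff_mul_coeff_add_weight, (mem_tropArgmin.1 hμ).2, (mem_tropArgmin.1 hν).2]
  have hrest : ∀ ab ∈ (Finset.HasAntidiagonal.antidiagonal (μ + ν)).erase (μ, ν),
      v (h.coeff μ * f.coeff ν) < v (h.coeff ab.1 * f.coeff ab.2) := by
    rintro ⟨a, b⟩ hab
    obtain ⟨hne, hmem⟩ := Finset.mem_erase.1 hab
    have hsum := Finset.HasAntidiagonal.mem_antidiagonal.1 hmem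
    rw [← WithTop.add_lt_add_iff_right (WithTop.coe_ne_top :
      ((∑ i, y i * ((μ + ν) i : ℝ) : ℝ) : WithTop ℝ) ≠ ⊤), hterm, ← hsum,
      map_coeff_mul_coeff_add_weight]
    rcases (trop_le_tropTerm h y a).lt_or_eq with hlt | ha
    · exact WithTop.add_lt_add_of_lt_of_le hf hlt (trop_le_tropTerm f y b)
    rcases (trop_le_tropTerm f y b).lt_or_eq with hlt | hb
    · exact WithTop.add_lt_add_of_le_of_lt hh ha.le hlt
    obtain ⟨rfl, rfl⟩ := huniq a (mem_tropArgmin_of_eq_of_ne_top ha.symm hh)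
      b (mem_tropArgmin_of_eq_of_ne_top hb.symm hf) hsum
    exact absurd rfl hne
  have hμν : (μ, ν) ∈ Finset.HasAntidiagonal.antidiagonal (μ + ν) :=
    Finset.HasAntidiagonal.mem_antidiagonal.2 rfl
  rw [tropTerm, coeff_mul, ← Finset.add_sum_erase _ _ hμν,
    v.map_add_eq_of_lt_left (v.map_lt_sum ?_ hrest), hterm]
  have hsum_ne_top := hterm ▸ WithTop.add_ne_top.2 ⟨hh, hf⟩
  exact (WithTop.add_ne_top.1 hsum_ne_top).1

theorem tropTerm_mul_add_eq_of_toLex_le {h f : MvPolynomial (Fin n) K} {y : Fin n → ℝ}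
    {μ ν : Fin n →₀ ℕ} (hμ : μ ∈ tropArgmin v h y) (hν : ν ∈ tropArgmin v f y)
    (hμmax : ∀ a ∈ tropArgmin v h y, toLex a ≤ toLex μ)
    (hνmax : ∀ b ∈ tropArgmin v f y, toLex b ≤ toLex ν) :
    tropTerm v (h * f) y (μ + ν) = trop v h y + trop v f y :=
  tropTerm_mul_add_eq_of_unique hμ hν fun a ha b hb hab => by
    simpa using (add_eq_add_iff_eq_and_eq (hμmax a ha) (hνmax b hb)).1 (congrArg toLex hab)

theorem tropTerm_mul_add_eq_of_le_toLex {h f : MvPolynomial (Fin n) K} {y : Fin n → ℝ}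
    {μ ν : Fin n →₀ ℕ} (hμ : μ ∈ tropArgmin v h y) (hν : ν ∈ tropArgmin v f y)
    (hμmin : ∀ a ∈ tropArgmin v h y, toLex μ ≤ toLex a)
    (hνmin : ∀ b ∈ tropArgmin v f y, toLex ν ≤ toLex b) :
    tropTerm v (h * f) y (μ + ν) = trop v h y + trop v f y :=
  tropTerm_mul_add_eq_of_unique hμ hν fun a ha b hb hab => by
    simpa [eq_comm] using
      (add_eq_add_iff_eq_and_eq (hμmin a ha) (hνmin b hb)).1 (congrArg toLex hab.symm)

theorem trop_mul (h f : MvPolynomial (Fin n) K) (y : Fin n → ℝ) :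
    trop v (h * f) y = trop v h y + trop v f y := by
  rcases eq_or_ne h 0 with rfl | hh
  · simp [trop_zero]
  rcases eq_or_ne f 0 with rfl | hf
  · simp [trop_zero]
  obtain ⟨μ, hμ, hμmax⟩ := (tropArgmin v h y).exists_max_image toLex (tropArgmin_nonempty hh y)
  obtain ⟨ν, hν, hνmax⟩ := (tropArgmin v f y).exists_max_image toLex (tropArgmin_nonempty hf y)
  refine le_antisymm ?_ (Finset.le_inf fun ξ _ => trop_add_trop_le_tropTerm_mul h f y ξ)
  exact (trop_le_tropTerm _ y _).trans_eq (tropTerm_mul_add_eq_of_toLex_le hμ hν hμmax hνmax)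

theorem tropSet_subset_tropSet_mul {h : MvPolynomial (Fin n) K} (hh : h ≠ 0)
    (f : MvPolynomial (Fin n) K) : tropSet v f ⊆ tropSet v (h * f) := by
  intro y hy
  obtain ⟨ν₁, hν₁, ν₂, hν₂, hne⟩ := mem_tropSet_iff.1 hy
  obtain ⟨μm, hμm, hμmin⟩ := (tropArgmin v h y).exists_min_image toLex (tropArgmin_nonempty hh y)
  obtain ⟨μM, hμM, hμmax⟩ := (tropArgmin v h y).exists_max_image toLex (tropArgmin_nonempty hh y)
  obtain ⟨νm, hνm, hνmin⟩ := (tropArgmin v f y).exists_min_image toLex ⟨ν₁, hν₁⟩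
  obtain ⟨νM, hνM, hνmax⟩ := (tropArgmin v f y).exists_max_image toLex ⟨ν₁, hν₁⟩
  have hνlt : toLex νm < toLex νM := by
    obtain ⟨ν, hν, hνne⟩ : ∃ ν ∈ tropArgmin v f y, ν ≠ νm := by
      by_cases h₁ : ν₁ = νm
      · exact ⟨ν₂, hν₂, h₁ ▸ hne.symm⟩
      · exact ⟨ν₁, hν₁, h₁⟩
    exact ((hνmin ν hν).lt_of_ne (by simpa [eq_comm] using hνne)).trans_le (hνmax ν hν)
  have htop : trop v (h * f) y ≠ ⊤ := by
    rw [trop_mul]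
    exact WithTop.add_ne_top.2
      ⟨trop_ne_top_of_mem_tropArgmin hμm, trop_ne_top_of_mem_tropArgmin hνm⟩
  refine mem_tropSet_iff.2 ⟨μm + νm, ?_, μM + νM, ?_, fun heq => ?_⟩
  · exact mem_tropArgmin_of_eq_of_ne_top
      ((tropTerm_mul_add_eq_of_le_toLex hμm hνm hμmin hνmin).trans (trop_mul h f y).symm) htop
  · exact mem_tropArgmin_of_eq_of_ne_top
      ((tropTerm_mul_add_eq_of_toLex_le hμM hνM hμmax hνmax).trans (trop_mul h f y).symm) htop
  · exact (add_lt_add_of_le_of_lt (hμmax μm hμm) hνlt).ne (congrArg toLex heq)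

end

/-- For a principal ideal `I = (f)`, the tropicalization
`Trop(I) = ⋂_{g ∈ I, g ≠ 0} Trop(g)` equals `Trop(f)`. -/
theorem stmt5 {K : Type*} [Field K] {n : ℕ}
    (v : AddValuation K (WithTop ℝ)) (f : MvPolynomial (Fin n) K) (hf : f ≠ 0) :
    (⋂ g ∈ {g : MvPolynomial (Fin n) K | g ∈ Ideal.span {f} ∧ g ≠ 0},
      tropSet v g) = tropSet v f := by
  refine subset_antisymm (Set.iInter₂_subset f ⟨Ideal.mem_span_singleton_self f, hf⟩) ?_
  refine Set.subset_iInter₂ fun g ⟨hg, hg0⟩ => ?_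
  obtain ⟨h, rfl⟩ := Ideal.mem_span_singleton'.1 hg
  exact tropSet_subset_tropSet_mul (left_ne_zero_of_mul hg0) f
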